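/- arXiv:1809.06773 — 4 statements merged into one kernel-verified Lean document; each statement's English description precedes it below -/
import Mathlib

section
/- (PBH test, converse) Let A ∈ ℂ^{n×n} and B ∈ ℂ^{n×m}. If the controllability matrix Q = [B, AB, …, A^{n-1}B] does not have full row rank n, then there exist λ ∈ ℂ and a nonzero vector e ∈ ℂ^n such that eᵀA = λeᵀ and eᵀB = 0. -/
open Matrix

/-- The controllability matrix `[B, AB, …, A^(n-1)B]` over ℂ. -/
noncomputable def ctrbMatrixC {n m : ℕ} (A : Matrix (Fin n) (Fin n) ℂ) (B : Matrix (Fin n) (Fin m) ℂ) :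
    Matrix (Fin n) (Fin n × Fin m) ℂ :=
  Matrix.of fun i p => (A ^ (p.1 : ℕ) * B) i p.2

lemma vecMul_smul_mat {k l : ℕ} (x : Fin k → ℂ) (c : ℂ) (M : Matrix (Fin k) (Fin l) ℂ) :
    x ᵥ* (c • M) = c • (x ᵥ* M) := by
  funext j
  simp [vecMul, dotProduct, Finset.mul_sum, mul_left_comm]

/-- PBH test, converse: if the controllability matrix fails to have full row rank `n`,
there is a nonzero left eigenvector of `A` annihilating `B`. -/
theorem pbh_converse {n m : ℕ}
    (A : Matrix (Fin n) (Fin n) ℂ) (B : Matrix (Fin n) (Fin m) ℂ)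
    (h : (ctrbMatrixC A B).rank < n) :
    ∃ (lam : ℂ) (e : Fin n → ℂ), e ≠ 0 ∧ e ᵥ* A = lam • e ∧ e ᵥ* B = 0 := by
  classical
  have hn : 0 < n := lt_of_le_of_lt (Nat.zero_le _) h
  set Q := ctrbMatrixC A B with hQ
  set W : Submodule ℂ (Fin n → ℂ) := LinearMap.ker Q.vecMulLinear with hWdef
  -- membership criterion
  have memW : ∀ e : Fin n → ℂ, e ∈ W ↔ ∀ k : ℕ, k < n → e ᵥ* (A ^ k * B) = 0 := by
    intro e
    constructor
    · intro he k hk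
      have h0 : e ᵥ* Q = 0 := by
        simpa [Matrix.vecMulLinear_apply] using (LinearMap.mem_ker.mp he)
      funext j
      have := congrFun h0 (⟨k, hk⟩, j)
      simpa [hQ, ctrbMatrixC, vecMul, dotProduct] using this
    · intro he
      refine LinearMap.mem_ker.mpr ?_
      rw [Matrix.vecMulLinear_apply]
      funext p
      have := congrFun (he p.1 p.1.2) p.2
      simpa [hQ, ctrbMatrixC, vecMul, dotProduct] using this
  -- linear map M ↦ e ᵥ* (M * B)
  have hAn : ∀ e : Fin n → ℂ, e ∈ W → e ᵥ* (A ^ n * B) = 0 := by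
    intro e he
    rw [memW] at he
    let L : Matrix (Fin n) (Fin n) ℂ →ₗ[ℂ] (Fin m → ℂ) :=
      { toFun := fun M => e ᵥ* (M * B)
        map_add' := by
          intro M N
          show e ᵥ* ((M + N) * B) = e ᵥ* (M * B) + e ᵥ* (N * B)
          rw [Matrix.add_mul, Matrix.vecMul_add]
        map_smul' := by
          intro c M
          show e ᵥ* ((c • M) * B) = c • (e ᵥ* (M * B))
          rw [Matrix.smul_mul, vecMul_smul_mat] }
    have hch := Matrix.aeval_self_charpoly A
    have hdeg : A.charpoly.natDegree = n := by
      simpa using A.charpoly_natDegree_eq_dim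
    have hexp : (Polynomial.aeval A) A.charpoly =
        (∑ i ∈ Finset.range n, A.charpoly.coeff i • A ^ i) + A ^ n := by
      rw [Polynomial.aeval_eq_sum_range, hdeg, Finset.sum_range_succ]
      have hc : A.charpoly.coeff n = 1 := by
        simpa [hdeg] using A.charpoly_monic.coeff_natDegree
      rw [hc, one_smul]
    have hAneq : A ^ n = -(∑ i ∈ Finset.range n, A.charpoly.coeff i • A ^ i) := by
      rw [hch] at hexp
      linear_combination (norm := module) -hexp
    have : e ᵥ* (A ^ n * B) = L (A ^ n) := rfl
    rw [this, hAneq, map_neg, map_sum]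
    have : ∀ i ∈ Finset.range n, L (A.charpoly.coeff i • A ^ i) = 0 := by
      intro i hi
      rw [_root_.map_smul]
      have : L (A ^ i) = 0 := he i (Finset.mem_range.mp hi)
      rw [this, smul_zero]
    rw [Finset.sum_congr rfl this]
    simp
  -- invariance of W under left multiplication by A
  have hinv : ∀ e ∈ W, A.vecMulLinear e ∈ W := by
    intro e he
    rw [memW]
    intro k hk
    rw [Matrix.vecMulLinear_apply, Matrix.vecMul_vecMul, ← Matrix.mul_assoc, ← pow_succ']
    rcases lt_or_eq_of_le (Nat.succ_le_of_lt hk) with h' | h'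
    · exact (memW e).mp he _ h'
    · rw [show k + 1 = n from h']; exact hAn e he
  -- W is nontrivial
  haveI : Nontrivial W := by
    rw [← Module.finrank_pos_iff (R := ℂ)]
    have hrange : Module.finrank ℂ (LinearMap.range Q.vecMulLinear) = Qᵀ.rank := by
      have : Q.vecMulLinear = Qᵀ.mulVecLin := by
        ext v
        simp [Matrix.vecMulLinear_apply, Matrix.mulVecLin_apply, Matrix.mulVec_transpose]
      rw [this]; rfl
    have key : Qᵀ.rank + Module.finrank ℂ (LinearMap.ker Q.vecMulLinear) = n := by
      have h2 := LinearMap.finrank_range_add_finrank_ker Q.vecMulLinear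
      rw [hrange] at h2
      simpa using h2
    have h4 : Qᵀ.rank < n := by rw [Matrix.rank_transpose]; exact h
    show 0 < Module.finrank ℂ (LinearMap.ker Q.vecMulLinear)
    omega
  -- eigenvector of restriction
  let g : Module.End ℂ W := (A.vecMulLinear).restrict hinv
  obtain ⟨μ, hμ⟩ := Module.End.exists_eigenvalue g
  obtain ⟨w, hw⟩ := hμ.exists_hasEigenvector
  refine ⟨μ, (w : Fin n → ℂ), ?_, ?_, ?_⟩
  · intro h0
    exact hw.right (Subtype.ext h0)
  · have h1 := hw.apply_eq_smul
    have h2 : A.vecMulLinear (w : Fin n → ℂ) = μ • (w : Fin n → ℂ) :=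
      congrArg Subtype.val h1
    simpa [Matrix.vecMulLinear_apply] using h2
  · have := (memW (w : Fin n → ℂ)).mp w.2 0 hn
    simpa using this
end

section
/- Let A be a real symmetric n×n matrix, B ∈ ℝ^{n×m}, and suppose every eigenvalue mode of A is controllable, i.e., for every λ ∈ ℝ and every nonzero v ∈ ℝ^n with vᵀA = λvᵀ we have vᵀB ≠ 0. Then the controllability matrix Q = [B, AB, …, A^{n-1}B] has full row rank n. -/
open Matrix

/-- The controllability matrix `[B, AB, …, A^(n-1)B]`. -/
def ctrbMatrix {n m : ℕ} (A : Matrix (Fin n) (Fin n) ℝ) (B : Matrix (Fin n) (Fin m) ℝ) :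
    Matrix (Fin n) (Fin n × Fin m) ℝ :=
  Matrix.of fun i p => (A ^ (p.1 : ℕ) * B) i p.2

private lemma vecMul_sum' {n m : ℕ} {ι : Type*} (s : Finset ι) (v : Fin n → ℝ)
    (M : ι → Matrix (Fin n) (Fin m) ℝ) :
    v ᵥ* (∑ i ∈ s, M i) = ∑ i ∈ s, v ᵥ* M i := by
  ext j
  simp only [Matrix.vecMul, dotProduct, Finset.sum_apply, Matrix.sum_apply,
    Finset.mul_sum]
  rw [Finset.sum_comm]

private lemma vecMul_matsmul {n m : ℕ} (c : ℝ) (v : Fin n → ℝ)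
    (M : Matrix (Fin n) (Fin m) ℝ) :
    v ᵥ* (c • M) = c • (v ᵥ* M) := by
  ext j
  simp only [Matrix.vecMul, dotProduct, Matrix.smul_apply, Pi.smul_apply,
    smul_eq_mul, Finset.mul_sum]
  exact Finset.sum_congr rfl fun i _ => by ring

private lemma rank_eq_of_leftKer {n : ℕ} {ι : Type*} [Fintype ι]
    (Q : Matrix (Fin n) ι ℝ) (h : ∀ v : Fin n → ℝ, v ᵥ* Q = 0 → v = 0) :
    Q.rank = n := by
  rw [← Matrix.rank_transpose]
  have hker : LinearMap.ker Qᵀ.mulVecLin = ⊥ := by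
    rw [LinearMap.ker_eq_bot']
    intro v hv
    exact h v (by simpa using hv)
  have hrn := LinearMap.finrank_range_add_finrank_ker Qᵀ.mulVecLin
  rw [hker, finrank_bot, add_zero, Module.finrank_fintype_fun_eq_card, Fintype.card_fin] at hrn
  rw [Matrix.rank]
  exact hrn

/-- PBH test for real symmetric matrices: if every mode is controllable, the
controllability matrix has full row rank. -/
theorem symm_pbh_controllable {n m : ℕ}
    (A : Matrix (Fin n) (Fin n) ℝ) (B : Matrix (Fin n) (Fin m) ℝ)
    (hA : A.IsSymm)
    (hmodes : ∀ (lam : ℝ) (v : Fin n → ℝ), v ≠ 0 → v ᵥ* A = lam • v → v ᵥ* B ≠ 0) :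
    (ctrbMatrix A B).rank = n := by
  apply rank_eq_of_leftKer
  intro v hv
  by_contra hvne
  -- from the kernel condition, `v ᵥ* (A ^ k * B) = 0` for all `k < n`
  have hfin : ∀ k : Fin n, v ᵥ* (A ^ (k : ℕ) * B) = 0 := by
    intro k
    funext j
    exact congrFun hv (k, j)
  -- Cayley–Hamilton: `A ^ n` is a combination of lower powers
  have hCH : A ^ n = ∑ i ∈ Finset.range n, (-(A.charpoly.coeff i)) • A ^ i := by
    have h0 := A.aeval_self_charpoly
    have hcn : A.charpoly.coeff n = 1 := by
      have hc := (Matrix.charpoly_monic A).coeff_natDegree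
      rwa [Matrix.charpoly_natDegree_eq_dim, Fintype.card_fin] at hc
    rw [Polynomial.aeval_eq_sum_range, Matrix.charpoly_natDegree_eq_dim, Fintype.card_fin,
      Finset.sum_range_succ, hcn, one_smul] at h0
    have h1 := eq_neg_of_add_eq_zero_left h0
    have h2 : A ^ n = -∑ x ∈ Finset.range n, A.charpoly.coeff x • A ^ x := by
      rw [h1, neg_neg]
    rw [h2, ← Finset.sum_neg_distrib]
    exact Finset.sum_congr rfl fun i _ => (neg_smul _ _).symm
  -- hence `v ᵥ* (A ^ k * B) = 0` for all `k : ℕ`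
  have hall : ∀ k : ℕ, v ᵥ* (A ^ k * B) = 0 := by
    intro k
    induction k using Nat.strong_induction_on with
    | _ k ih =>
      rcases lt_or_ge k n with h | h
      · exact hfin ⟨k, h⟩
      · obtain ⟨j, rfl⟩ := Nat.exists_eq_add_of_le h
        have hj : n + j = j + n := add_comm _ _
        rw [hj, pow_add, hCH, Matrix.mul_sum, Matrix.sum_mul, vecMul_sum']
        refine Finset.sum_eq_zero fun i hi => ?_
        rw [Finset.mem_range] at hi
        rw [mul_smul_comm, Matrix.smul_mul, vecMul_matsmul, ← pow_add,
          ih (j + i) (by omega)]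
        simp
  -- the subspace annihilating all `A ^ k * B`
  set K : Submodule ℝ (Fin n → ℝ) :=
    ⨅ k : ℕ, LinearMap.ker ((A ^ k * B).vecMulLinear) with hK
  have memK : ∀ w : Fin n → ℝ, w ∈ K ↔ ∀ k : ℕ, w ᵥ* (A ^ k * B) = 0 := by
    intro w
    simp [hK, Submodule.mem_iInf, LinearMap.mem_ker]
  -- move to Euclidean space
  let eL := WithLp.linearEquiv 2 ℝ (Fin n → ℝ)
  let W : Submodule ℝ (EuclideanSpace ℝ (Fin n)) := K.comap (eL : _ →ₗ[ℝ] _)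
  let T : EuclideanSpace ℝ (Fin n) →ₗ[ℝ] EuclideanSpace ℝ (Fin n) := Matrix.toEuclideanLin A
  have hTapp : ∀ x : EuclideanSpace ℝ (Fin n), eL (T x) = (eL x) ᵥ* A := by
    intro x
    have : eL (T x) = A *ᵥ (eL x) := rfl
    rw [this, ← Matrix.vecMul_transpose, hA.eq]
  have memW : ∀ x : EuclideanSpace ℝ (Fin n), x ∈ W ↔ ∀ k : ℕ, eL x ᵥ* (A ^ k * B) = 0 := by
    intro x
    rw [Submodule.mem_comap, LinearEquiv.coe_coe, memK]
  have hmaps : ∀ x ∈ W, T x ∈ W := by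
    intro x hx
    rw [memW] at hx ⊢
    intro k
    rw [hTapp, Matrix.vecMul_vecMul, ← Matrix.mul_assoc, ← pow_succ']
    exact hx (k + 1)
  -- T is symmetric
  have hherm : A.IsHermitian := by
    rw [Matrix.IsHermitian]
    ext i j
    simpa using congrFun (congrFun hA.eq i) j
  have hsym : T.IsSymmetric := Matrix.isHermitian_iff_isSymmetric.mp hherm
  have hsymW : (T.restrict hmaps).IsSymmetric := hsym.restrict_invariant hmaps
  -- W is nontrivial
  have hvW : (eL.symm v : EuclideanSpace ℝ (Fin n)) ∈ W := by
    rw [memW]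
    simpa using hall
  have hvne' : (eL.symm v : EuclideanSpace ℝ (Fin n)) ≠ 0 := by
    intro h0
    exact hvne (by simpa using congrArg eL h0)
  haveI : Nontrivial W := ⟨⟨⟨eL.symm v, hvW⟩, 0, by
    intro h
    exact hvne' (congrArg Subtype.val h)⟩⟩
  -- get an eigenvector in W
  obtain ⟨μ, hμ⟩ : ∃ μ : ℝ, Module.End.HasEigenvalue (T.restrict hmaps) μ :=
    ⟨_, hsymW.hasEigenvalue_iSup_of_finiteDimensional⟩
  obtain ⟨w, hw⟩ := hμ.exists_hasEigenvector
  have hw0 : (w : EuclideanSpace ℝ (Fin n)) ≠ 0 := fun h =>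
    hw.right (Subtype.ext h)
  have hweig : T (w : EuclideanSpace ℝ (Fin n)) = μ • (w : EuclideanSpace ℝ (Fin n)) := by
    have := Module.End.mem_eigenspace_iff.mp hw.left
    exact congrArg Subtype.val this
  -- translate back to plain vectors
  set u : Fin n → ℝ := eL (w : EuclideanSpace ℝ (Fin n)) with hu
  have hune : u ≠ 0 := by
    rw [hu]
    simpa using hw0
  have hueig : u ᵥ* A = μ • u := by
    rw [hu, ← hTapp, hweig, _root_.map_smul]
  have huB : u ᵥ* B = 0 := by
    have hwW := (memW _).mp w.2
    have := hwW 0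
    simpa using this
  exact hmodes μ u hune hueig huB
end

section
/- (Hoffman–Wielandt for symmetric matrices) Let A and E be real symmetric n×n matrices, with eigenvalues λ₁ ≤ … ≤ λ_n of A and μ₁ ≤ … ≤ μ_n of A+E (in nondecreasing order). Then there exists a permutation σ of {1,…,n} such that Σᵢ (μ_{σ(i)} − λᵢ)² ≤ ‖E‖_F², where ‖E‖_F² = tr(E Eᵀ). -/
/-!
Write `A = U Λ Uᵀ` and `A + E = V M Vᵀ` with `U, V` orthogonal and put `W = Uᵀ V`. Then
`Uᵀ E V = W M - Λ W` has entries `(μⱼ - λᵢ) Wᵢⱼ`, so `tr(E Eᵀ) = Σᵢⱼ (μⱼ - λᵢ)² Wᵢⱼ²`.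
Since `W` is orthogonal, `(Wᵢⱼ²)` is doubly stochastic, hence by Birkhoff's theorem a convex
combination of permutation matrices, and the linear function `S ↦ Σᵢⱼ (μⱼ - λᵢ)² Sᵢⱼ` is at
least its value at one of them.
-/

open Matrix

namespace Matrix

variable {m n R : Type*} [Fintype m] [Fintype n]

theorem trace_mul_transpose_self_eq_sum_sq [CommSemiring R] (F : Matrix m n R) :
    (F * Fᵀ).trace = ∑ i, ∑ j, F i j ^ 2 := by
  simp [trace, mul_apply, sq]

theorem trace_mul_transpose_self_orthogonal_conj [DecidableEq m] [DecidableEq n]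
    [CommSemiring R] {U : Matrix m m R} {V : Matrix n n R} (hU : U * Uᵀ = 1) (hV : V * Vᵀ = 1)
    (E : Matrix m n R) :
    ((Uᵀ * E * V) * (Uᵀ * E * V)ᵀ).trace = (E * Eᵀ).trace := by
  have : (Uᵀ * E * V) * (Uᵀ * E * V)ᵀ = Uᵀ * (E * Eᵀ * U) := by
    simp only [transpose_mul, transpose_transpose, Matrix.mul_assoc, ← Matrix.mul_assoc V, hV,
      Matrix.one_mul]
  rw [this, trace_mul_comm, Matrix.mul_assoc, Matrix.mul_assoc, hU, Matrix.mul_one]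

theorem sq_entries_mem_doublyStochastic [DecidableEq n] [CommRing R] [LinearOrder R]
    [IsStrictOrderedRing R] {W : Matrix n n R} (hW : W * Wᵀ = 1) :
    (of fun i j => W i j ^ 2) ∈ doublyStochastic R n := by
  have hW' : Wᵀ * W = 1 := mul_eq_one_comm.mp hW
  refine mem_doublyStochastic_iff_sum.mpr ⟨fun i j => sq_nonneg _, fun i => ?_, fun j => ?_⟩
  · simpa [mul_apply, sq] using congrFun (congrFun hW i) i
  · simpa [mul_apply, sq] using congrFun (congrFun hW' j) j

theorem exists_perm_sum_le_of_mem_doublyStochastic [DecidableEq n] [Field R] [LinearOrder R]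
    [IsStrictOrderedRing R] {S : Matrix n n R} (hS : S ∈ doublyStochastic R n) (c : n → n → R) :
    ∃ σ : Equiv.Perm n, ∑ i, c i (σ i) ≤ ∑ i, ∑ j, c i j * S i j := by
  let cost : Matrix n n R →ₗ[R] R := ∑ i, ∑ j, c i j • entryLinearMap R R i j
  rw [← SetLike.mem_coe, doublyStochastic_eq_convexHull_permMatrix] at hS
  obtain ⟨_, ⟨σ, rfl⟩, hσ⟩ :=
    (cost.concaveOn convex_univ).exists_le_of_mem_convexHull (Set.subset_univ _) hS
  refine ⟨σ, le_of_eq_of_le ?_ (by simpa [cost] using hσ)⟩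
  simp

theorem mul_sub_mul_apply_of_mul_eq_diagonal_mul [DecidableEq m] [CommRing R]
    {P : Matrix m n R} {A B : Matrix n n R} {V : Matrix n m R} {a b : m → R}
    (hA : P * A = diagonal a * P) (hB : B * V = V * diagonal b) (i j : m) :
    (P * (B - A) * V) i j = (b j - a i) * (P * V) i j := by
  rw [Matrix.mul_sub, Matrix.sub_mul, Matrix.mul_assoc P B, hB, hA, ← Matrix.mul_assoc,
    Matrix.mul_assoc (diagonal a), sub_apply, mul_diagonal, diagonal_mul]
  ring

end Matrix

namespace Matrix.IsHermitian

variable {n : Type*} [Fintype n] [DecidableEq n] {A : Matrix n n ℝ} (hA : A.IsHermitian)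

theorem eigenvectorUnitary_mul_transpose :
    (hA.eigenvectorUnitary : Matrix n n ℝ) * (hA.eigenvectorUnitary : Matrix n n ℝ)ᵀ = 1 :=
  (mem_orthogonalGroup_iff n ℝ).mp hA.eigenvectorUnitary.prop

theorem mul_eigenvectorUnitary :
    A * hA.eigenvectorUnitary = hA.eigenvectorUnitary * diagonal hA.eigenvalues := by
  nth_rw 1 [hA.spectral_theorem]
  simp [Matrix.mul_assoc]

theorem transpose_eigenvectorUnitary_mul :
    (hA.eigenvectorUnitary : Matrix n n ℝ)ᵀ * A =
      diagonal hA.eigenvalues * (hA.eigenvectorUnitary : Matrix n n ℝ)ᵀ := by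
  have hAt : Aᵀ = A := by simpa [conjTranspose_eq_transpose_of_trivial] using hA.eq
  calc _ = (A * (hA.eigenvectorUnitary : Matrix n n ℝ))ᵀ := by rw [transpose_mul, hAt]
    _ = _ := by rw [mul_eigenvectorUnitary, transpose_mul, diagonal_transpose]

end Matrix.IsHermitian

/-- Hoffman–Wielandt theorem for real symmetric matrices: there is a pairing of the
eigenvalues of `A` and of `A + E` whose squared mismatch is bounded by `‖E‖_F² = tr(EEᵀ)`. -/
theorem hoffman_wielandt {n : ℕ}
    (A E : Matrix (Fin n) (Fin n) ℝ)
    (hA : A.IsHermitian) (hE : E.IsHermitian) :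
    ∃ σ : Equiv.Perm (Fin n),
      ∑ i, ((hA.add hE).eigenvalues (σ i) - hA.eigenvalues i) ^ 2 ≤ (E * Eᵀ).trace := by
  set hB := hA.add hE
  set U : Matrix (Fin n) (Fin n) ℝ := ↑hA.eigenvectorUnitary
  set V : Matrix (Fin n) (Fin n) ℝ := ↑hB.eigenvectorUnitary
  have hU : U * Uᵀ = 1 := hA.eigenvectorUnitary_mul_transpose
  have hV : V * Vᵀ = 1 := hB.eigenvectorUnitary_mul_transpose
  have hW : (Uᵀ * V) * (Uᵀ * V)ᵀ = 1 := by
    simp [transpose_mul, Matrix.mul_assoc, ← Matrix.mul_assoc V, hV, mul_eq_one_comm.mp hU]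
  have hF (i j) : (Uᵀ * E * V) i j = (hB.eigenvalues j - hA.eigenvalues i) * (Uᵀ * V) i j := by
    simpa using mul_sub_mul_apply_of_mul_eq_diagonal_mul hA.transpose_eigenvectorUnitary_mul
      hB.mul_eigenvectorUnitary i j
  obtain ⟨σ, hσ⟩ := exists_perm_sum_le_of_mem_doublyStochastic
    (sq_entries_mem_doublyStochastic hW) fun i j => (hB.eigenvalues j - hA.eigenvalues i) ^ 2
  refine ⟨σ, hσ.trans_eq ?_⟩
  rw [← trace_mul_transpose_self_orthogonal_conj hU hV E, trace_mul_transpose_self_eq_sum_sq]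
  simp [hF, mul_pow]
end

section
/- Let A be a real symmetric n×n matrix with simple nonzero eigenvalue λ, and B ∈ ℝ^{n×m}. Then the mode λ is uncontrollable (i.e., there is a nonzero v with vᵀA = λvᵀ and vᵀB = 0) if and only if adj(λI − A)·B = 0, equivalently tr([adj(λI−A)B][adj(λI−A)B]ᵀ) = 0. -/
/-!
Write `M = λ • 1 - A`. Since `λ` is a root of the characteristic polynomial, `adj M * M = 0`, so
every row of `adj M` is a left eigenvector for `λ` or zero. The left eigenspace is a line, its
dimension being at most the algebraic multiplicity `1`, hence `adj M * B = 0` as soon as one left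
eigenvector `v` satisfies `v ᵥ* B = 0`. Conversely `adj M ≠ 0`: otherwise `adj (X • 1 - A)` is
divisible by `X - λ`, and cancelling `X - λ` in `(X • 1 - A) * adj (X • 1 - A) = χ_A • 1` gives
`M * N = (χ_A / (X - λ))(λ) • 1` for some matrix `N`; multiplying by a left eigenvector shows
`(χ_A / (X - λ))(λ) = 0`, so `λ` would be a double root. A nonzero row of `adj M` is then a left
eigenvector annihilating `B`.
-/

open Matrix Polynomial

namespace Matrix

def IsUncontrollableMode {K ι κ : Type*} [Field K] [Fintype ι]
    (A : Matrix ι ι K) (B : Matrix ι κ K) (lam : K) : Prop :=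
  ∃ v : ι → K, v ≠ 0 ∧ v ᵥ* A = lam • v ∧ v ᵥ* B = 0

theorem exists_eq_X_sub_C_smul_of_map_eval_eq_zero {R m n : Type*} [CommRing R]
    {Q : Matrix m n R[X]} {a : R} (hQ : Q.map (eval a) = 0) :
    ∃ N : Matrix m n R[X], Q = (X - C a) • N :=
  ⟨Q.map (· /ₘ (X - C a)), Matrix.ext fun i j =>
    (mul_divByMonic_eq_iff_isRoot.mpr (congrFun (congrFun hQ i) j)).symm⟩

theorem adjugate_apply_vecMul_eq_zero {R ι : Type*} [CommRing R] [Fintype ι] [DecidableEq ι]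
    {M : Matrix ι ι R} (hM : M.det = 0) (i : ι) : adjugate M i ᵥ* M = 0 := by
  rw [← mul_apply_eq_vecMul, adjugate_mul, hM, zero_smul]
  rfl

variable {K ι : Type*} [Field K] [Fintype ι] [DecidableEq ι] {A : Matrix ι ι K} {lam : K}

theorem map_eval_charmatrix (A : Matrix ι ι K) (lam : K) :
    (charmatrix A).map (eval lam) = lam • 1 - A := by
  ext i j
  by_cases h : i = j
  · subst h
    simp
  · simp [h, one_apply_ne h]

theorem vecMul_smul_one_sub_eq_zero_iff {v : ι → K} :
    v ᵥ* (lam • 1 - A) = 0 ↔ v ᵥ* A = lam • v := by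
  rw [vecMul_sub, vecMul_smul, vecMul_one, sub_eq_zero, eq_comm]

theorem det_smul_one_sub_eq_zero (h : A.charpoly.IsRoot lam) : (lam • 1 - A).det = 0 := by
  rwa [← map_eval_charmatrix, ← coe_evalRingHom, ← RingHom.mapMatrix_apply, ← RingHom.map_det]

theorem isRoot_charpoly_of_rootMultiplicity_pos (h : 0 < A.charpoly.rootMultiplicity lam) :
    A.charpoly.IsRoot lam :=
  (rootMultiplicity_pos A.charpoly_monic.ne_zero).mp h

theorem exists_smul_eq_of_vecMul_eq_smul (hsimple : A.charpoly.rootMultiplicity lam = 1)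
    {v w : ι → K} (hv0 : v ≠ 0) (hv : v ᵥ* A = lam • v) (hw : w ᵥ* A = lam • w) :
    ∃ c : K, c • v = w := by
  set E := Module.End.eigenspace (toLin' Aᵀ) lam
  have mem : ∀ {u : ι → K}, u ᵥ* A = lam • u → u ∈ E := fun h => by
    rwa [Module.End.mem_eigenspace_iff, toLin'_apply, mulVec_transpose]
  have hE : Module.finrank K E = 1 := by
    refine le_antisymm ?_ ?_
    · simpa [charpoly_toLin', charpoly_transpose, hsimple] using
        LinearMap.finrank_eigenspace_le (toLin' Aᵀ) lam
    · exact Module.finrank_pos_iff_exists_ne_zero.mpr ⟨⟨v, mem hv⟩, by simpa using hv0⟩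
  obtain ⟨c, hc⟩ := exists_smul_eq_of_finrank_eq_one hE (x := ⟨v, mem hv⟩)
    (by simpa using hv0) ⟨w, mem hw⟩
  exact ⟨c, congrArg Subtype.val hc⟩

theorem adjugate_smul_one_sub_ne_zero (hsimple : A.charpoly.rootMultiplicity lam = 1) :
    adjugate (lam • 1 - A) ≠ 0 := by
  intro hadj
  have hroot : A.charpoly.IsRoot lam := isRoot_charpoly_of_rootMultiplicity_pos (by omega)
  set q := A.charpoly /ₘ (X - C lam)
  have hq : q.eval lam ≠ 0 := by
    simpa [hsimple] using eval_divByMonic_pow_rootMultiplicity_ne_zero lam A.charpoly_monic.ne_zero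
  obtain ⟨N, hN⟩ : ∃ N, adjugate (charmatrix A) = (X - C lam) • N := by
    refine exists_eq_X_sub_C_smul_of_map_eval_eq_zero ?_
    rw [← coe_evalRingHom, ← RingHom.mapMatrix_apply, RingHom.map_adjugate,
      RingHom.mapMatrix_apply, coe_evalRingHom, map_eval_charmatrix, hadj]
  have hfactor : charmatrix A * N = q • 1 := by
    refine smul_right_injective _ (X_sub_C_ne_zero lam) ?_
    dsimp only
    rw [← Matrix.mul_smul, ← hN, mul_adjugate, smul_smul, mul_divByMonic_eq_iff_isRoot.mpr hroot]
    rfl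
  have heval : (lam • 1 - A) * N.map (eval lam) = q.eval lam • 1 := by
    have := congrArg (·.map (evalRingHom lam)) hfactor
    rw [Matrix.map_mul, coe_evalRingHom, map_eval_charmatrix] at this
    rw [this]
    simp [smul_one_eq_diagonal]
  obtain ⟨v, hv0, hv⟩ := exists_vecMul_eq_zero_iff.mpr (det_smul_one_sub_eq_zero hroot)
  have hqv : q.eval lam • v = 0 := by
    rw [← vecMul_one v, ← vecMul_smul, ← heval, ← vecMul_vecMul, hv, zero_vecMul]
  exact hv0 ((smul_eq_zero.mp hqv).resolve_left hq)

theorem isUncontrollableMode_iff_adjugate_mul_eq_zero {κ : Type*} (B : Matrix ι κ K)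
    (hsimple : A.charpoly.rootMultiplicity lam = 1) :
    IsUncontrollableMode A B lam ↔ adjugate (lam • 1 - A) * B = 0 := by
  have hroot : A.charpoly.IsRoot lam := isRoot_charpoly_of_rootMultiplicity_pos (by omega)
  have hdet := det_smul_one_sub_eq_zero hroot
  have hrow (i : ι) : adjugate (lam • 1 - A) i ᵥ* A = lam • adjugate (lam • 1 - A) i :=
    vecMul_smul_one_sub_eq_zero_iff.mp (adjugate_apply_vecMul_eq_zero hdet i)
  constructor
  · rintro ⟨v, hv0, hv, hvB⟩
    ext i j : 1
    obtain ⟨c, hc⟩ := exists_smul_eq_of_vecMul_eq_smul hsimple hv0 hv (hrow i)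
    rw [mul_apply_eq_vecMul, ← hc, smul_vecMul, hvB, smul_zero]
    rfl
  · intro hB
    obtain ⟨i, hi⟩ : ∃ i, adjugate (lam • 1 - A) i ≠ 0 := by
      by_contra! h
      exact adjugate_smul_one_sub_ne_zero hsimple (funext h)
    exact ⟨_, hi, hrow i, by rw [← mul_apply_eq_vecMul, hB]; rfl⟩

end Matrix

theorem uncontrollable_mode_iff_adjugate_general {n m : ℕ}
    (A : Matrix (Fin n) (Fin n) ℝ) (B : Matrix (Fin n) (Fin m) ℝ)
    (lam : ℝ)
    (hsimple : A.charpoly.rootMultiplicity lam = 1) :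
    ((∃ v : Fin n → ℝ, v ≠ 0 ∧ v ᵥ* A = lam • v ∧ v ᵥ* B = 0) ↔
        Matrix.adjugate (lam • (1 : Matrix (Fin n) (Fin n) ℝ) - A) * B = 0) ∧
      ((∃ v : Fin n → ℝ, v ≠ 0 ∧ v ᵥ* A = lam • v ∧ v ᵥ* B = 0) ↔
        ((Matrix.adjugate (lam • (1 : Matrix (Fin n) (Fin n) ℝ) - A) * B) *
          (Matrix.adjugate (lam • (1 : Matrix (Fin n) (Fin n) ℝ) - A) * B)ᵀ).trace = 0) := by
  have key := isUncontrollableMode_iff_adjugate_mul_eq_zero B hsimple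
  refine ⟨key, key.trans ?_⟩
  rw [← conjTranspose_eq_transpose_of_trivial, trace_mul_conjTranspose_self_eq_zero_iff]

/-- For a real symmetric matrix `A` with simple nonzero eigenvalue `λ`, the mode `λ`
is uncontrollable iff `adj(λI − A)·B = 0`, equivalently
`tr([adj(λI−A)B][adj(λI−A)B]ᵀ) = 0`. -/
theorem uncontrollable_mode_iff_adjugate {n m : ℕ}
    (A : Matrix (Fin n) (Fin n) ℝ) (B : Matrix (Fin n) (Fin m) ℝ)
    (hA : A.IsSymm) (lam : ℝ) (hlam : lam ≠ 0)
    (hroot : A.charpoly.IsRoot lam)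
    (hsimple : A.charpoly.rootMultiplicity lam = 1) :
    ((∃ v : Fin n → ℝ, v ≠ 0 ∧ v ᵥ* A = lam • v ∧ v ᵥ* B = 0) ↔
        Matrix.adjugate (lam • (1 : Matrix (Fin n) (Fin n) ℝ) - A) * B = 0) ∧
      ((∃ v : Fin n → ℝ, v ≠ 0 ∧ v ᵥ* A = lam • v ∧ v ᵥ* B = 0) ↔
        ((Matrix.adjugate (lam • (1 : Matrix (Fin n) (Fin n) ℝ) - A) * B) *
          (Matrix.adjugate (lam • (1 : Matrix (Fin n) (Fin n) ℝ) - A) * B)ᵀ).trace = 0) :=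
  uncontrollable_mode_iff_adjugate_general A B lam hsimple
end
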